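/- First-order optimality characterization of the geometric softmax: assume the kernel matrix K = (exp(−c_{ij}/2))_{i,j} is positive definite and let f ∈ ℝ^d. A point α ∈ △^d equals g-softmax(f) (the unique minimizer of Φ_C(·,f) over △^d) if and only if there exists a constant A ∈ ℝ such that (f_i + T(−f,α)_i)/2 = A for all i with α_i > 0 and (f_i + T(−f,α)_i)/2 ≤ A for all i with α_i = 0; moreover, in that case A = Ω_C^*(f). -/

import Mathlib

open Finset Real Filter

noncomputable section

/-- The probability simplex in `ℝ^d`. -/
def simplexS (d : ℕ) : Set (Fin d → ℝ) := stdSimplex ℝ (Fin d)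


open scoped Classical

/-- `Φ_C(α,f) = Σ_{i,j} α_i α_j exp(-(f_i + f_j + c_{ij})/2)`. -/
def Phi {d : ℕ} (C : Matrix (Fin d) (Fin d) ℝ) (α f : Fin d → ℝ) : ℝ :=
  ∑ i, ∑ j, α i * α j * Real.exp (-(f i + f j + C i j) / 2)

/-- The geometric log-sum-exp `Ω_C^*(f) = -log min_{α ∈ △^d} Φ_C(α, f)`. -/
def OmegaStar {d : ℕ} (C : Matrix (Fin d) (Fin d) ℝ) (f : Fin d → ℝ) : ℝ :=
  -Real.log (sInf ((fun α => Phi C α f) '' simplexS d))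

/-- The geometric softmax: the (unique, when the kernel is positive definite) minimizer of
`Φ_C(·, f)` over the simplex. -/
def gsoftmax {d : ℕ} (C : Matrix (Fin d) (Fin d) ℝ) (f : Fin d → ℝ) : Fin d → ℝ :=
  if h : ∃ α ∈ simplexS d, IsMinOn (fun β => Phi C β f) (simplexS d) α
  then h.choose else fun _ => 0

/-- The soft C-transform `T(f,α)_i = -2 log Σ_j α_j exp((f_j - c_{ij})/2)`. -/
def Tsoft {d : ℕ} (C : Matrix (Fin d) (Fin d) ℝ) (f α : Fin d → ℝ) : Fin d → ℝ :=
  fun i => -2 * Real.log (∑ j, α j * Real.exp ((f j - C i j) / 2))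

/-- `f` is the symmetric Sinkhorn potential of `α`: `-f = T(-f, α)`. -/
def IsSinkhornPotential {d : ℕ} (C : Matrix (Fin d) (Fin d) ℝ) (α f : Fin d → ℝ) : Prop :=
  -f = Tsoft C (-f) α

/-- The symmetric Sinkhorn potential `∇Ω(α)`: the (unique, when the kernel is positive
definite) `f` with `-f = T(-f, α)`. -/
def gradOmega {d : ℕ} (C : Matrix (Fin d) (Fin d) ℝ) (α : Fin d → ℝ) : Fin d → ℝ :=
  if h : ∃ f : Fin d → ℝ, IsSinkhornPotential C α f then h.choose else fun _ => 0

/-- The extrapolation `f^E = -T(-(f - Ω_C^*(f)·1), g-softmax(f)) + Ω_C^*(f)·1`. -/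
def extrap {d : ℕ} (C : Matrix (Fin d) (Fin d) ℝ) (f : Fin d → ℝ) : Fin d → ℝ :=
  fun i => -(Tsoft C (fun j => -(f j - OmegaStar C f)) (gsoftmax C f) i) + OmegaStar C f

/-- The kernel matrix `K = (exp(-c_{ij}/2))_{ij}`. -/
def kernelK {d : ℕ} (C : Matrix (Fin d) (Fin d) ℝ) : Matrix (Fin d) (Fin d) ℝ :=
  Matrix.of fun i j => Real.exp (-(C i j) / 2)

/-!
With `w_i = exp (-f_i / 2)`, `Φ_C(·, f)` is the quadratic form of the positive definite matrix
`G = diag w · K · diag w`, and `(f_i + T(-f,α)_i) / 2 = -log (G α)_i`. A point `α` of the simplex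
minimizes a quadratic form with symmetric matrix `G` only if `(G α)_i` is minimal on the support
of `α`: otherwise moving a little mass from the support point to a smaller coordinate decreases the
form to first order. For positive definite `G` the exact expansion
`(α + h)ᵀ G (α + h) = αᵀ G α + 2 hᵀ G α + hᵀ G h` shows that the condition is also sufficient, and
even forces strict minimality, hence uniqueness. The common value of `(G α)_i` on the support is
`αᵀ G α = min Φ_C(·, f)`, whence `A = Ω_C^*(f)`.
-/

open Matrix Topology

section QuadraticFormOnSimplex

variable {ι : Type*} [Fintype ι]

lemma exists_pos_of_mem_stdSimplex {α : ι → ℝ} (hα : α ∈ stdSimplex ℝ ι) : ∃ i, 0 < α i := by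
  by_contra! h
  linarith [hα.2, Finset.sum_nonpos (s := Finset.univ) fun i _ => h i]

lemma le_dotProduct_of_mem_stdSimplex {β v : ι → ℝ} {c : ℝ} (hβ : β ∈ stdSimplex ℝ ι)
    (h : ∀ j, c ≤ v j) : c ≤ β ⬝ᵥ v :=
  calc c = ∑ j, β j * c := by rw [← Finset.sum_mul, hβ.2, one_mul]
    _ ≤ β ⬝ᵥ v := Finset.sum_le_sum fun j _ => mul_le_mul_of_nonneg_left (h j) (hβ.1 j)

lemma dotProduct_eq_of_mem_stdSimplex {α v : ι → ℝ} {c : ℝ} (hα : α ∈ stdSimplex ℝ ι)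
    (h : ∀ i, 0 < α i → v i = c) : α ⬝ᵥ v = c :=
  calc α ⬝ᵥ v = ∑ i, α i * c := Finset.sum_congr rfl fun i _ => by
        rcases (hα.1 i).eq_or_lt with h0 | hpos
        · rw [← h0, zero_mul, zero_mul]
        · rw [h i hpos]
    _ = c := by rw [← Finset.sum_mul, hα.2, one_mul]

lemma exists_const_on_support_iff {α g : ι → ℝ} (hα : α ∈ stdSimplex ℝ ι) :
    (∃ A, (∀ i, 0 < α i → g i = A) ∧ (∀ i, α i = 0 → g i ≤ A)) ↔
      ∀ i j, 0 < α i → g j ≤ g i := by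
  constructor
  · rintro ⟨A, hpos, hzero⟩ i j hi
    rw [hpos i hi]
    rcases (hα.1 j).eq_or_lt with hj | hj
    · exact hzero j hj.symm
    · exact (hpos j hj).le
  · intro h
    obtain ⟨i, hi⟩ := exists_pos_of_mem_stdSimplex hα
    exact ⟨g i, fun j hj => le_antisymm (h i j hi) (h j i hj), fun j _ => h i j hi⟩

lemma eq_dotProduct_of_support_min {α v : ι → ℝ} (hα : α ∈ stdSimplex ℝ ι)
    (h : ∀ i j, 0 < α i → v i ≤ v j) {i : ι} (hi : 0 < α i) : v i = α ⬝ᵥ v :=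
  (dotProduct_eq_of_mem_stdSimplex hα fun k hk => le_antisymm (h k i hk) (h i k hi)).symm

lemma dotProduct_le_of_support_min {α v : ι → ℝ} (hα : α ∈ stdSimplex ℝ ι)
    (h : ∀ i j, 0 < α i → v i ≤ v j) (j : ι) : α ⬝ᵥ v ≤ v j := by
  obtain ⟨i, hi⟩ := exists_pos_of_mem_stdSimplex hα
  rw [← eq_dotProduct_of_support_min hα h hi]
  exact h i j hi

lemma nonneg_of_forall_nonneg_mul_add_mul_sq {a b δ : ℝ} (hδ : 0 < δ)
    (h : ∀ ε, 0 < ε → ε ≤ δ → 0 ≤ a * ε + b * ε ^ 2) : 0 ≤ a := by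
  have hlim : Tendsto (fun ε => a + b * ε) (𝓝[>] 0) (𝓝 a) := by
    have hcont : Continuous fun ε : ℝ => a + b * ε := by fun_prop
    simpa using (hcont.tendsto 0).mono_left nhdsWithin_le_nhds
  refine ge_of_tendsto hlim ?_
  filter_upwards [Ioc_mem_nhdsGT hδ] with ε ⟨hε, hεδ⟩
  exact nonneg_of_mul_nonneg_right (by linarith [h ε hε hεδ]) hε

variable {M : Matrix ι ι ℝ}

lemma Matrix.IsSymm.dotProduct_mulVec_comm (hM : M.IsSymm) (x y : ι → ℝ) :
    x ⬝ᵥ M *ᵥ y = y ⬝ᵥ M *ᵥ x := by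
  rw [dotProduct_mulVec, ← mulVec_transpose, hM.eq, dotProduct_comm]

lemma Matrix.IsSymm.add_dotProduct_mulVec_add (hM : M.IsSymm) (x y : ι → ℝ) :
    (x + y) ⬝ᵥ M *ᵥ (x + y) = x ⬝ᵥ M *ᵥ x + 2 * (y ⬝ᵥ M *ᵥ x) + y ⬝ᵥ M *ᵥ y := by
  rw [mulVec_add, add_dotProduct, dotProduct_add, dotProduct_add, hM.dotProduct_mulVec_comm x y]
  ring

lemma Matrix.IsSymm.mulVec_le_of_isMinOn_stdSimplex (hM : M.IsSymm) {α : ι → ℝ}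
    (hα : α ∈ stdSimplex ℝ ι) (hmin : IsMinOn (fun β => β ⬝ᵥ M *ᵥ β) (stdSimplex ℝ ι) α)
    {i : ι} (hi : 0 < α i) (j : ι) : (M *ᵥ α) i ≤ (M *ᵥ α) j := by
  classical
  set u : ι → ℝ := Pi.single j 1 - Pi.single i 1
  have hmem : ∀ ε, 0 < ε → ε ≤ α i → α + ε • u ∈ stdSimplex ℝ ι := by
    intro ε hε hεi
    refine ⟨fun k => ?_, ?_⟩
    · have hj : 0 ≤ ε * (Pi.single j 1 : ι → ℝ) k :=
        mul_nonneg hε.le (by rw [Pi.single_apply]; split_ifs <;> norm_num)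
      have hi' : 0 ≤ α k - ε * (Pi.single i 1 : ι → ℝ) k := by
        rcases eq_or_ne k i with rfl | hk
        · simpa using hεi
        · simpa [hk] using hα.1 k
      simp only [u, Pi.add_apply, Pi.smul_apply, Pi.sub_apply, smul_eq_mul]
      linarith
    · simp [u, Finset.sum_add_distrib, ← Finset.mul_sum, hα.2]
  have hexpand : ∀ ε, (α + ε • u) ⬝ᵥ M *ᵥ (α + ε • u) =
      α ⬝ᵥ M *ᵥ α + 2 * ((M *ᵥ α) j - (M *ᵥ α) i) * ε + (u ⬝ᵥ M *ᵥ u) * ε ^ 2 := by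
    intro ε
    rw [hM.add_dotProduct_mulVec_add, mulVec_smul, smul_dotProduct, dotProduct_smul,
      smul_dotProduct, sub_dotProduct, single_dotProduct, single_dotProduct]
    simp only [smul_eq_mul]
    ring
  have hslope := nonneg_of_forall_nonneg_mul_add_mul_sq (a := 2 * ((M *ᵥ α) j - (M *ᵥ α) i))
    (b := u ⬝ᵥ M *ᵥ u) hi fun ε hε hεi => by
      have hle : α ⬝ᵥ M *ᵥ α ≤ (α + ε • u) ⬝ᵥ M *ᵥ (α + ε • u) :=
        isMinOn_iff.mp hmin _ (hmem ε hε hεi)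
      linarith [hexpand ε]
  linarith

lemma Matrix.PosDef.dotProduct_mulVec_lt_of_support_min (hM : M.PosDef) {α β : ι → ℝ}
    (hα : α ∈ stdSimplex ℝ ι) (h : ∀ i j, 0 < α i → (M *ᵥ α) i ≤ (M *ᵥ α) j)
    (hβ : β ∈ stdSimplex ℝ ι) (hne : β ≠ α) : α ⬝ᵥ M *ᵥ α < β ⬝ᵥ M *ᵥ β := by
  have hsymm : M.IsSymm := isHermitian_iff_isSymm.mp hM.isHermitian
  have hlin : α ⬝ᵥ M *ᵥ α ≤ β ⬝ᵥ M *ᵥ α :=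
    le_dotProduct_of_mem_stdSimplex hβ (dotProduct_le_of_support_min hα h)
  have hquad : 0 < (β - α) ⬝ᵥ M *ᵥ (β - α) := by
    simpa using hM.dotProduct_mulVec_pos (sub_ne_zero.mpr hne)
  calc α ⬝ᵥ M *ᵥ α < α ⬝ᵥ M *ᵥ α + 2 * ((β - α) ⬝ᵥ M *ᵥ α) + (β - α) ⬝ᵥ M *ᵥ (β - α) := by
        rw [sub_dotProduct]; linarith
    _ = β ⬝ᵥ M *ᵥ β := by rw [← hsymm.add_dotProduct_mulVec_add, add_sub_cancel]

theorem Matrix.PosDef.isMinOn_stdSimplex_iff (hM : M.PosDef) {α : ι → ℝ}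
    (hα : α ∈ stdSimplex ℝ ι) :
    IsMinOn (fun β => β ⬝ᵥ M *ᵥ β) (stdSimplex ℝ ι) α ↔
      ∀ i j, 0 < α i → (M *ᵥ α) i ≤ (M *ᵥ α) j := by
  have hsymm : M.IsSymm := isHermitian_iff_isSymm.mp hM.isHermitian
  refine ⟨fun hmin i j hi => hsymm.mulVec_le_of_isMinOn_stdSimplex hα hmin hi j,
    fun h => isMinOn_iff.mpr fun β hβ => ?_⟩
  rcases eq_or_ne β α with rfl | hne
  · exact le_rfl
  · exact (hM.dotProduct_mulVec_lt_of_support_min hα h hβ hne).le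

lemma Matrix.PosDef.eq_of_isMinOn_stdSimplex (hM : M.PosDef) {α β : ι → ℝ}
    (hα : α ∈ stdSimplex ℝ ι) (hβ : β ∈ stdSimplex ℝ ι)
    (hminα : IsMinOn (fun γ => γ ⬝ᵥ M *ᵥ γ) (stdSimplex ℝ ι) α)
    (hminβ : IsMinOn (fun γ => γ ⬝ᵥ M *ᵥ γ) (stdSimplex ℝ ι) β) : α = β := by
  by_contra hne
  exact (isMinOn_iff.mp hminβ α hα).not_gt <|
    hM.dotProduct_mulVec_lt_of_support_min hα ((hM.isMinOn_stdSimplex_iff hα).1 hminα) hβ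
      (Ne.symm hne)

end QuadraticFormOnSimplex

section GeometricSoftmax

variable {d : ℕ} (C : Matrix (Fin d) (Fin d) ℝ) (f : Fin d → ℝ)

def gibbsKernel : Matrix (Fin d) (Fin d) ℝ :=
  Matrix.of fun i j => exp (-(f i + f j + C i j) / 2)

lemma phi_eq_dotProduct_gibbsKernel_mulVec (α : Fin d → ℝ) :
    Phi C α f = α ⬝ᵥ gibbsKernel C f *ᵥ α := by
  simp only [Phi, dotProduct, mulVec, gibbsKernel, of_apply, Finset.mul_sum]
  exact Finset.sum_congr rfl fun i _ => Finset.sum_congr rfl fun j _ => by ring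

variable {C} in
lemma gibbsKernel_posDef (hK : (kernelK C).PosDef) : (gibbsKernel C f).PosDef := by
  set w : Fin d → ℝ := fun i => exp (-f i / 2)
  have hinj : Function.Injective (diagonal w).mulVec := fun x y hxy => funext fun i => by
    simpa [mulVec_diagonal, w] using congrFun hxy i
  convert hK.conjTranspose_mul_mul_same hinj using 1
  ext i j
  simp only [gibbsKernel, kernelK, diagonal_conjTranspose, star_trivial, diagonal_mul,
    mul_diagonal, of_apply, w, ← exp_add]
  ring_nf

variable {f} in
lemma gibbsKernel_mulVec_pos {α : Fin d → ℝ} (hα : α ∈ simplexS d) (i : Fin d) :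
    0 < (gibbsKernel C f *ᵥ α) i := by
  obtain ⟨j, hj⟩ := exists_pos_of_mem_stdSimplex hα
  exact Finset.sum_pos' (fun k _ => mul_nonneg (exp_pos _).le (hα.1 k))
    ⟨j, Finset.mem_univ j, mul_pos (exp_pos _) hj⟩

lemma half_add_tsoft_eq_neg_log {α : Fin d → ℝ} (hα : α ∈ simplexS d) (i : Fin d) :
    (f i + Tsoft C (-f) α i) / 2 = -log ((gibbsKernel C f *ᵥ α) i) := by
  have hfactor : (gibbsKernel C f *ᵥ α) i =
      exp (-f i / 2) * ∑ j, α j * exp (((-f) j - C i j) / 2) := by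
    simp only [mulVec, dotProduct, gibbsKernel, of_apply, Finset.mul_sum, Pi.neg_apply]
    refine Finset.sum_congr rfl fun j _ => ?_
    rw [mul_left_comm, ← exp_add]
    ring_nf
  have hsum : 0 < ∑ j, α j * exp (((-f) j - C i j) / 2) :=
    pos_of_mul_pos_right (hfactor ▸ gibbsKernel_mulVec_pos C hα i) (exp_pos _).le
  rw [hfactor, log_mul (exp_pos _).ne' hsum.ne', log_exp, Tsoft]
  ring

lemma exists_isMinOn_phi (hS : (simplexS d).Nonempty) :
    ∃ α ∈ simplexS d, IsMinOn (fun β => Phi C β f) (simplexS d) α :=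
  (isCompact_stdSimplex ℝ (Fin d)).exists_isMinOn hS (by unfold Phi; fun_prop)

lemma gsoftmax_isMinOn (hS : (simplexS d).Nonempty) :
    gsoftmax C f ∈ simplexS d ∧ IsMinOn (fun β => Phi C β f) (simplexS d) (gsoftmax C f) := by
  have h := exists_isMinOn_phi C f hS
  rw [gsoftmax, dif_pos h]
  exact h.choose_spec

variable {C f} in
lemma eq_gsoftmax_iff_isMinOn (hK : (kernelK C).PosDef) {α : Fin d → ℝ} (hα : α ∈ simplexS d) :
    α = gsoftmax C f ↔ IsMinOn (fun β => Phi C β f) (simplexS d) α := by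
  obtain ⟨hg, hgmin⟩ := gsoftmax_isMinOn C f ⟨α, hα⟩
  refine ⟨fun h => h ▸ hgmin, fun hmin => ?_⟩
  simp only [phi_eq_dotProduct_gibbsKernel_mulVec] at hmin hgmin
  exact (gibbsKernel_posDef f hK).eq_of_isMinOn_stdSimplex hα hg hmin hgmin

variable {C f} in
lemma omegaStar_eq_of_isMinOn {α : Fin d → ℝ} (hα : α ∈ simplexS d)
    (hmin : IsMinOn (fun β => Phi C β f) (simplexS d) α) :
    OmegaStar C f = -log (Phi C α f) := by
  have hleast : IsLeast ((fun β => Phi C β f) '' simplexS d) (Phi C α f) :=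
    ⟨⟨α, hα, rfl⟩, by rintro _ ⟨β, hβ, rfl⟩; exact isMinOn_iff.mp hmin β hβ⟩
  rw [OmegaStar, hleast.csInf_eq]

end GeometricSoftmax

theorem gsoftmax_first_order_characterization_general (d : ℕ)
    (C : Matrix (Fin d) (Fin d) ℝ)
    (hK : (kernelK C).PosDef) (f : Fin d → ℝ) (α : Fin d → ℝ) (hα : α ∈ simplexS d) :
    (α = gsoftmax C f ↔
      ∃ A : ℝ, (∀ i, 0 < α i → (f i + Tsoft C (-f) α i) / 2 = A) ∧
        (∀ i, α i = 0 → (f i + Tsoft C (-f) α i) / 2 ≤ A)) ∧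
    (α = gsoftmax C f →
      (∀ i, 0 < α i → (f i + Tsoft C (-f) α i) / 2 = OmegaStar C f) ∧
      (∀ i, α i = 0 → (f i + Tsoft C (-f) α i) / 2 ≤ OmegaStar C f)) := by
  set v := gibbsKernel C f *ᵥ α
  have hv : ∀ i, 0 < v i := gibbsKernel_mulVec_pos C hα
  have hg : ∀ i, (f i + Tsoft C (-f) α i) / 2 = -log (v i) := half_add_tsoft_eq_neg_log C f hα
  have hchar : α = gsoftmax C f ↔ ∀ i j, 0 < α i → v i ≤ v j := by
    rw [eq_gsoftmax_iff_isMinOn hK hα, ← (gibbsKernel_posDef f hK).isMinOn_stdSimplex_iff hα]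
    simp only [phi_eq_dotProduct_gibbsKernel_mulVec, simplexS]
  refine ⟨?_, fun h => ?_⟩
  · rw [hchar, exists_const_on_support_iff hα]
    simp only [hg, neg_le_neg_iff, log_le_log_iff (hv _) (hv _)]
  have hsupp := hchar.1 h
  have hΩ : OmegaStar C f = -log (α ⬝ᵥ v) := by
    rw [omegaStar_eq_of_isMinOn hα ((eq_gsoftmax_iff_isMinOn hK hα).1 h),
      phi_eq_dotProduct_gibbsKernel_mulVec]
  obtain ⟨i₀, hi₀⟩ := exists_pos_of_mem_stdSimplex hα
  have hpos : 0 < α ⬝ᵥ v := eq_dotProduct_of_support_min hα hsupp hi₀ ▸ hv i₀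
  refine ⟨fun i hi => by rw [hg, hΩ, ← eq_dotProduct_of_support_min hα hsupp hi], fun i _ => ?_⟩
  rw [hg, hΩ, neg_le_neg_iff]
  exact log_le_log hpos (dotProduct_le_of_support_min hα hsupp i)

/-- First-order optimality characterization of the geometric softmax: `α ∈ △^d` equals
`g-softmax(f)` iff there is `A ∈ ℝ` with `(f_i + T(-f,α)_i)/2 = A` on the support of `α`
and `(f_i + T(-f,α)_i)/2 ≤ A` off the support; moreover in that case `A = Ω_C^*(f)`. -/
theorem gsoftmax_first_order_characterization (d : ℕ) (hd : 1 ≤ d)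
    (C : Matrix (Fin d) (Fin d) ℝ) (hCsym : C.IsSymm) (hCdiag : ∀ i, C i i = 0)
    (hK : (kernelK C).PosDef) (f : Fin d → ℝ) (α : Fin d → ℝ) (hα : α ∈ simplexS d) :
    (α = gsoftmax C f ↔
      ∃ A : ℝ, (∀ i, 0 < α i → (f i + Tsoft C (-f) α i) / 2 = A) ∧
        (∀ i, α i = 0 → (f i + Tsoft C (-f) α i) / 2 ≤ A)) ∧
    (α = gsoftmax C f →
      (∀ i, 0 < α i → (f i + Tsoft C (-f) α i) / 2 = OmegaStar C f) ∧
      (∀ i, α i = 0 → (f i + Tsoft C (-f) α i) / 2 ≤ OmegaStar C f)) :=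
  gsoftmax_first_order_characterization_general d C hK f α hα
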